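/- arXiv:2109.10975 — 3 statements merged into one kernel-verified Lean document; each statement's English description precedes it below -/
import Mathlib

section
/- For y ∈ ℝ^m define the marginal (GLS) estimator β̃ = (XᵀV⁻¹X)⁻¹XᵀV⁻¹y and the BLUP of the random effects ũ = G Zᵀ V⁻¹ (y − X β̃). Then β̃ = (XᵀR⁻¹X)⁻¹ (XᵀR⁻¹y − XᵀR⁻¹Z ũ); that is, the estimator of the fixed effects obtained from the marginal log-likelihood coincides with the estimator obtained from the conditional (extended) log-likelihood with the random effect replaced by its BLUP (β̃_m = β̃_c). -/
open Matrix

/-!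
Write `e = y - X β̃` for the marginal residual. The GLS normal equations say `XᵀV⁻¹e = 0`, and
since `R = V - ZGZᵀ` the BLUP satisfies `e - Zũ = (V - ZGZᵀ)V⁻¹e = RV⁻¹e`. Hence
`R⁻¹(y - Zũ) = R⁻¹Xβ̃ + V⁻¹e`, and multiplying by `Xᵀ` kills the second term:
`XᵀR⁻¹(y - Zũ) = XᵀR⁻¹X β̃`, which is the conditional normal equation.
-/

namespace Matrix

variable {m n k : Type*} [Fintype n]

theorem mulVec_injective_of_rank_eq_card {K : Type*} [Field K] {A : Matrix m n K}
    (hA : A.rank = Fintype.card n) : Function.Injective A.mulVec :=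
  mulVec_injective_iff.mpr <| linearIndependent_iff_card_eq_finrank_span.mpr <| by
    rw [← hA, rank_eq_finrank_span_cols]
    rfl

variable [Fintype m]

theorem PosDef.transpose_mul_mul_same {A : Matrix m m ℝ} {B : Matrix m n ℝ} (hA : A.PosDef)
    (hB : Function.Injective B.mulVec) : (Bᵀ * A * B).PosDef := by
  simpa using hA.conjTranspose_mul_mul_same hB

theorem PosDef.add_mul_mul_transpose [Fintype k] {R : Matrix m m ℝ} {G : Matrix k k ℝ}
    (hR : R.PosDef) (hG : G.PosSemidef) (Z : Matrix m k ℝ) : (R + Z * G * Zᵀ).PosDef :=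
  hR.add_posSemidef (by simpa using hG.mul_mul_conjTranspose_same Z)

section CommRing

variable {K : Type*} [CommRing K]

theorem transpose_mul_mulVec_sub_gls_eq_zero [DecidableEq n] {X : Matrix m n K}
    {W : Matrix m m K} (h : IsUnit (Xᵀ * W * X).det) (y : m → K) :
    (Xᵀ * W) *ᵥ (y - X *ᵥ (((Xᵀ * W * X)⁻¹ * Xᵀ * W) *ᵥ y)) = 0 := by
  have hproj : Xᵀ * W * X * ((Xᵀ * W * X)⁻¹ * Xᵀ * W) = Xᵀ * W := by
    simp only [← Matrix.mul_assoc, mul_nonsing_inv _ h, Matrix.one_mul]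
  rw [mulVec_sub, mulVec_mulVec, mulVec_mulVec, hproj, sub_self]

theorem mul_nonsing_inv_of_eq_add [DecidableEq m] {R S V : Matrix m m K} (hV : V = R + S)
    (h : IsUnit V.det) :
    R * V⁻¹ = 1 - S * V⁻¹ := by
  rw [eq_sub_iff_add_eq, ← Matrix.add_mul, ← hV, mul_nonsing_inv _ h]

theorem conditional_normal_eq_of_marginal_normal_eq [Fintype k] [DecidableEq m]
    {X : Matrix m n K} {Z : Matrix m k K} {R V : Matrix m m K} {G : Matrix k k K}
    (hR : IsUnit R.det) (hVdet : IsUnit V.det)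
    (hV : V = R + Z * G * Zᵀ) {y : m → K} {β : n → K}
    (hnormal : (Xᵀ * V⁻¹) *ᵥ (y - X *ᵥ β) = 0) :
    (Xᵀ * R⁻¹ * X) *ᵥ β =
      (Xᵀ * R⁻¹) *ᵥ y - (Xᵀ * R⁻¹ * Z) *ᵥ ((G * Zᵀ * V⁻¹) *ᵥ (y - X *ᵥ β)) := by
  set e := y - X *ᵥ β
  have hblup : e - Z *ᵥ ((G * Zᵀ * V⁻¹) *ᵥ e) = R *ᵥ (V⁻¹ *ᵥ e) := by
    rw [mulVec_mulVec, mulVec_mulVec, mul_nonsing_inv_of_eq_add hV hVdet, sub_mulVec,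
      one_mulVec]
    simp only [Matrix.mul_assoc]
  have hy : y - Z *ᵥ ((G * Zᵀ * V⁻¹) *ᵥ e) = X *ᵥ β + R *ᵥ (V⁻¹ *ᵥ e) := by
    rw [← hblup]
    simp only [e]
    abel
  calc (Xᵀ * R⁻¹ * X) *ᵥ β
      = (Xᵀ * R⁻¹ * X) *ᵥ β + (Xᵀ * V⁻¹) *ᵥ e := by rw [hnormal, add_zero]
    _ = (Xᵀ * R⁻¹) *ᵥ (X *ᵥ β + R *ᵥ (V⁻¹ *ᵥ e)) := by
      rw [mulVec_add, mulVec_mulVec, mulVec_mulVec, mulVec_mulVec, Matrix.mul_assoc Xᵀ R⁻¹ R,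
        nonsing_inv_mul _ hR, Matrix.mul_one, Matrix.mul_assoc]
    _ = _ := by rw [← hy, mulVec_sub, mulVec_mulVec _ _ Z]

end CommRing

end Matrix

theorem stmt4_general {m p r : ℕ}
    (X : Matrix (Fin m) (Fin p) ℝ) (Z : Matrix (Fin m) (Fin r) ℝ)
    (R : Matrix (Fin m) (Fin m) ℝ) (G : Matrix (Fin r) (Fin r) ℝ)
    (hR : R.PosDef) (hG : G.PosDef)
    (hX : X.rank = p)
    (V : Matrix (Fin m) (Fin m) ℝ) (hV : V = R + Z * G * Zᵀ)
    (y : Fin m → ℝ)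
    (βt : Fin p → ℝ) (hβt : βt = ((Xᵀ * V⁻¹ * X)⁻¹ * Xᵀ * V⁻¹) *ᵥ y)
    (ut : Fin r → ℝ) (hut : ut = (G * Zᵀ * V⁻¹) *ᵥ (y - X *ᵥ βt)) :
    βt = (Xᵀ * R⁻¹ * X)⁻¹ *ᵥ ((Xᵀ * R⁻¹) *ᵥ y - (Xᵀ * R⁻¹ * Z) *ᵥ ut) := by
  have hXinj := mulVec_injective_of_rank_eq_card (hX.trans (Fintype.card_fin p).symm)
  have hVpd : V.PosDef := hV ▸ hR.add_mul_mul_transpose hG.posSemidef Z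
  have hXRX : IsUnit (Xᵀ * R⁻¹ * X).det :=
    (isUnit_iff_isUnit_det _).mp (hR.inv.transpose_mul_mul_same hXinj).isUnit
  have hXVX : IsUnit (Xᵀ * V⁻¹ * X).det :=
    (isUnit_iff_isUnit_det _).mp (hVpd.inv.transpose_mul_mul_same hXinj).isUnit
  have hnormal : (Xᵀ * V⁻¹) *ᵥ (y - X *ᵥ βt) = 0 :=
    hβt ▸ transpose_mul_mulVec_sub_gls_eq_zero hXVX y
  rw [hut, ← conditional_normal_eq_of_marginal_normal_eq
    ((isUnit_iff_isUnit_det _).mp hR.isUnit) ((isUnit_iff_isUnit_det _).mp hVpd.isUnit) hV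
    hnormal, mulVec_mulVec, nonsing_inv_mul _ hXRX, one_mulVec]

/-- The marginal (GLS) estimator `β̃ = (XᵀV⁻¹X)⁻¹XᵀV⁻¹y` coincides with the
estimator obtained from the conditional (extended) log-likelihood with the
random effect replaced by its BLUP `ũ = G Zᵀ V⁻¹ (y − X β̃)`:
`β̃ = (XᵀR⁻¹X)⁻¹ (XᵀR⁻¹y − XᵀR⁻¹Z ũ)` (i.e. `β̃_m = β̃_c`). -/
theorem stmt4 {m p r : ℕ} (hm : 0 < m) (hp : 0 < p) (hr : 0 < r)
    (X : Matrix (Fin m) (Fin p) ℝ) (Z : Matrix (Fin m) (Fin r) ℝ)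
    (R : Matrix (Fin m) (Fin m) ℝ) (G : Matrix (Fin r) (Fin r) ℝ)
    (hR : R.PosDef) (hG : G.PosDef)
    (hX : X.rank = p)
    (V : Matrix (Fin m) (Fin m) ℝ) (hV : V = R + Z * G * Zᵀ)
    (y : Fin m → ℝ)
    (βt : Fin p → ℝ) (hβt : βt = ((Xᵀ * V⁻¹ * X)⁻¹ * Xᵀ * V⁻¹) *ᵥ y)
    (ut : Fin r → ℝ) (hut : ut = (G * Zᵀ * V⁻¹) *ᵥ (y - X *ᵥ βt)) :
    βt = (Xᵀ * R⁻¹ * X)⁻¹ *ᵥ ((Xᵀ * R⁻¹) *ᵥ y - (Xᵀ * R⁻¹ * Z) *ᵥ ut) :=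
  stmt4_general X Z R G hR hG hX V hV y βt hβt ut hut
end

section
/- For y ∈ ℝ^m define β̃ = (XᵀV⁻¹X)⁻¹XᵀV⁻¹y and ũ = G Zᵀ V⁻¹ (y − X β̃). Then the pair (β̃, ũ) solves Henderson's mixed-model equations: XᵀR⁻¹X β̃ + XᵀR⁻¹Z ũ = XᵀR⁻¹y and ZᵀR⁻¹X β̃ + (ZᵀR⁻¹Z + G⁻¹) ũ = ZᵀR⁻¹y; equivalently, K (β̃, ũ) = CᵀR⁻¹y with C = [X Z] and K the Henderson block matrix. -/
open Matrix

namespace Matrix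

variable {K : Type*} [Field K] {m n : Type*} [Fintype n]

theorem mulVec_injective_of_rank_eq_card_s5 (X : Matrix m n K) (hX : X.rank = Fintype.card n) :
    Function.Injective X.mulVec := by
  rw [← coe_mulVecLin, ← LinearMap.ker_eq_bot, ← Submodule.finrank_eq_zero]
  have hrank_nullity := X.mulVecLin.finrank_range_add_finrank_ker
  rw [Module.finrank_fintype_fun_eq_card, ← rank, hX] at hrank_nullity
  omega

end Matrix

/-- With `e = y - Xβ` the GLS residual and `u = G Zᵀ V⁻¹ e`, one has `Zu = (V - R) V⁻¹ e`,
so `R⁻¹ (Xβ + Zu) = R⁻¹ y - V⁻¹ e`; the equations then follow from `Xᵀ V⁻¹ e = 0`. -/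
theorem mixedModel_equations_of_gls {K : Type*} [CommRing K] {m p r : Type*}
    [Fintype m] [Fintype p] [Fintype r] [DecidableEq m] [DecidableEq r]
    {X : Matrix m p K} {Z : Matrix m r K} {R V : Matrix m m K} {G : Matrix r r K}
    (hR : IsUnit R) (hG : IsUnit G) (hV : IsUnit V) (hVdef : V = R + Z * G * Zᵀ)
    {y : m → K} {β : p → K} (hβ : (Xᵀ * V⁻¹ * X) *ᵥ β = (Xᵀ * V⁻¹) *ᵥ y)
    {u : r → K} (hu : u = (G * Zᵀ * V⁻¹) *ᵥ (y - X *ᵥ β)) :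
    (Xᵀ * R⁻¹ * X) *ᵥ β + (Xᵀ * R⁻¹ * Z) *ᵥ u = (Xᵀ * R⁻¹) *ᵥ y ∧
      (Zᵀ * R⁻¹ * X) *ᵥ β + (Zᵀ * R⁻¹ * Z + G⁻¹) *ᵥ u = (Zᵀ * R⁻¹) *ᵥ y := by
  set e := y - X *ᵥ β with he
  have hnormal : Xᵀ *ᵥ (V⁻¹ *ᵥ e) = 0 := by
    rw [he, mulVec_sub, mulVec_sub, mulVec_mulVec, mulVec_mulVec, mulVec_mulVec, ← hβ, sub_self]
  have hGu : G⁻¹ *ᵥ u = Zᵀ *ᵥ (V⁻¹ *ᵥ e) := by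
    rw [hu, mulVec_mulVec, ← Matrix.mul_assoc, ← Matrix.mul_assoc,
      nonsing_inv_mul _ ((isUnit_iff_isUnit_det G).1 hG), Matrix.one_mul, mulVec_mulVec]
  have hfit : R⁻¹ *ᵥ (X *ᵥ β + Z *ᵥ u) = R⁻¹ *ᵥ y - V⁻¹ *ᵥ e := by
    have hZu : Z *ᵥ u = e - R *ᵥ (V⁻¹ *ᵥ e) := by
      rw [hu, mulVec_mulVec, ← Matrix.mul_assoc, ← Matrix.mul_assoc, ← mulVec_mulVec,
        show Z * G * Zᵀ = V - R by rw [hVdef]; abel, sub_mulVec, mulVec_mulVec,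
        mul_nonsing_inv _ ((isUnit_iff_isUnit_det V).1 hV), one_mulVec]
    rw [hZu, show X *ᵥ β + (e - R *ᵥ (V⁻¹ *ᵥ e)) = y - R *ᵥ (V⁻¹ *ᵥ e) by rw [he]; abel,
      mulVec_sub, mulVec_mulVec, nonsing_inv_mul _ ((isUnit_iff_isUnit_det R).1 hR), one_mulVec]
  constructor
  · simp only [← mulVec_mulVec]
    rw [← mulVec_add Xᵀ, ← mulVec_add R⁻¹, hfit, mulVec_sub, hnormal, sub_zero]
  · rw [add_mulVec, ← add_assoc, hGu]
    simp only [← mulVec_mulVec]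
    rw [← mulVec_add Zᵀ, ← mulVec_add R⁻¹, hfit, ← mulVec_add, sub_add_cancel]

theorem stmt5_general {m p r : ℕ}
    (X : Matrix (Fin m) (Fin p) ℝ) (Z : Matrix (Fin m) (Fin r) ℝ)
    (R : Matrix (Fin m) (Fin m) ℝ) (G : Matrix (Fin r) (Fin r) ℝ)
    (hR : R.PosDef) (hG : G.PosDef)
    (hX : X.rank = p)
    (V : Matrix (Fin m) (Fin m) ℝ) (hV : V = R + Z * G * Zᵀ)
    (y : Fin m → ℝ)
    (βt : Fin p → ℝ) (hβt : βt = ((Xᵀ * V⁻¹ * X)⁻¹ * Xᵀ * V⁻¹) *ᵥ y)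
    (ut : Fin r → ℝ) (hut : ut = (G * Zᵀ * V⁻¹) *ᵥ (y - X *ᵥ βt)) :
    (Xᵀ * R⁻¹ * X) *ᵥ βt + (Xᵀ * R⁻¹ * Z) *ᵥ ut = (Xᵀ * R⁻¹) *ᵥ y ∧
      (Zᵀ * R⁻¹ * X) *ᵥ βt + (Zᵀ * R⁻¹ * Z + G⁻¹) *ᵥ ut = (Zᵀ * R⁻¹) *ᵥ y := by
  have hVpd : V.PosDef := by
    simpa [hV] using hR.add_posSemidef (hG.posSemidef.mul_mul_conjTranspose_same Z)
  have hSpd : (Xᵀ * V⁻¹ * X).PosDef := by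
    simpa using hVpd.inv.conjTranspose_mul_mul_same
      (X.mulVec_injective_of_rank_eq_card_s5 (by simpa using hX))
  have hgls : (Xᵀ * V⁻¹ * X) *ᵥ βt = (Xᵀ * V⁻¹) *ᵥ y := by
    rw [hβt, mulVec_mulVec, ← Matrix.mul_assoc, ← Matrix.mul_assoc,
      mul_nonsing_inv _ ((isUnit_iff_isUnit_det _).1 hSpd.isUnit), Matrix.one_mul]
  exact mixedModel_equations_of_gls hR.isUnit hG.isUnit hVpd.isUnit hV hgls hut

/-- The pair `(β̃, ũ)` with `β̃ = (XᵀV⁻¹X)⁻¹XᵀV⁻¹y` and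
`ũ = G Zᵀ V⁻¹ (y − X β̃)` solves Henderson's mixed-model equations:
`XᵀR⁻¹X β̃ + XᵀR⁻¹Z ũ = XᵀR⁻¹y` and
`ZᵀR⁻¹X β̃ + (ZᵀR⁻¹Z + G⁻¹) ũ = ZᵀR⁻¹y`. -/
theorem stmt5 {m p r : ℕ} (hm : 0 < m) (hp : 0 < p) (hr : 0 < r)
    (X : Matrix (Fin m) (Fin p) ℝ) (Z : Matrix (Fin m) (Fin r) ℝ)
    (R : Matrix (Fin m) (Fin m) ℝ) (G : Matrix (Fin r) (Fin r) ℝ)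
    (hR : R.PosDef) (hG : G.PosDef)
    (hX : X.rank = p)
    (V : Matrix (Fin m) (Fin m) ℝ) (hV : V = R + Z * G * Zᵀ)
    (y : Fin m → ℝ)
    (βt : Fin p → ℝ) (hβt : βt = ((Xᵀ * V⁻¹ * X)⁻¹ * Xᵀ * V⁻¹) *ᵥ y)
    (ut : Fin r → ℝ) (hut : ut = (G * Zᵀ * V⁻¹) *ᵥ (y - X *ᵥ βt)) :
    (Xᵀ * R⁻¹ * X) *ᵥ βt + (Xᵀ * R⁻¹ * Z) *ᵥ ut = (Xᵀ * R⁻¹) *ᵥ y ∧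
      (Zᵀ * R⁻¹ * X) *ᵥ βt + (Zᵀ * R⁻¹ * Z + G⁻¹) *ᵥ ut = (Zᵀ * R⁻¹) *ᵥ y :=
  stmt5_general X Z R G hR hG hX V hV y βt hβt ut hut
end

section
/- Let W be the (r+m)×(r+m) block-diagonal matrix diag(G, R), T = [Z I_m] the m×(r+m) block matrix, A = (XᵀV⁻¹X)⁻¹XᵀV⁻¹, P = [I_r 0] the r×(r+m) block matrix, and let M be the (p+r)×(r+m) matrix whose top p×(r+m) block is A·T and whose bottom r×(r+m) block is G Zᵀ V⁻¹ (I_m − X A)·T − P. Then M W Mᵀ = K⁻¹. (Since M sends (u,e) to (β̃ − β, ũ − u) and W = Cov(u,e), this is the identity MSE{μ̃ᵢ(θ)} = cᵢᵀ K⁻¹ cᵢ for the variance of the BLUP-based predictor of the mixed parameter.) -/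
open Matrix

/-!
Write `L = [A; GZᵀV⁻¹(I − XA)]` for the map `y ↦ (β̃, ũ)`, so that `M = L·T − [0; P]`.
Henderson's equations `K·L = [X Z]ᵀR⁻¹` give `K·M·W = N` with `N = [[0, Xᵀ], [−I, Zᵀ]]`,
while `A·X = I` and `V⁻¹(I − XA)·X = 0` give `M·Nᵀ = I`.
Hence `K·(M W Mᵀ) = N·Mᵀ = (M·Nᵀ)ᵀ = I`.
-/

theorem Matrix.mulVec_injective_of_rank_eq_card_s13 {𝕜 m n : Type*} [Field 𝕜] [Fintype m]
    [Fintype n] {A : Matrix m n 𝕜} (hA : A.rank = Fintype.card n) :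
    Function.Injective A.mulVec := by
  have h := LinearMap.finrank_range_add_finrank_ker A.mulVecLin
  rw [← rank, hA, Module.finrank_fintype_fun_eq_card, add_eq_left,
    Submodule.finrank_eq_zero, LinearMap.ker_eq_bot] at h
  exact h

section MixedModel

variable {α : Type*} [CommRing α] {m p r : Type*} [Fintype m] [Fintype r]
  [DecidableEq m] [DecidableEq r]

/-- If `(β̃, ũ) = (L₁ y, L₂ y)` for `y = Xβ + Zu + e` with `L₁ X = 1` and `L₂ X = 0`, this matrix
sends `(u, e)` to `(β̃ − β, ũ − u)`. -/
def estimationErrorMatrix (L₁ : Matrix p m α) (L₂ : Matrix r m α) (Z : Matrix m r α) :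
    Matrix (p ⊕ r) (r ⊕ m) α :=
  fromRows (L₁ * fromCols Z (1 : Matrix m m α))
    (L₂ * fromCols Z (1 : Matrix m m α) - fromCols (1 : Matrix r r α) 0)

theorem estimationErrorMatrix_mul_transpose_fromBlocks [DecidableEq p] {L₁ : Matrix p m α}
    {L₂ : Matrix r m α} {X : Matrix m p α} {Z : Matrix m r α} (h₁ : L₁ * X = 1)
    (h₂ : L₂ * X = 0) :
    estimationErrorMatrix L₁ L₂ Z * (fromBlocks 0 Xᵀ (-1 : Matrix r r α) Zᵀ)ᵀ = 1 := by
  have hT : fromCols Z (1 : Matrix m m α) * (fromBlocks 0 Xᵀ (-1 : Matrix r r α) Zᵀ)ᵀ =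
      fromCols X 0 := by
    simp [fromBlocks_transpose, fromCols_mul_fromBlocks]
  have hP : fromCols (1 : Matrix r r α) (0 : Matrix r m α) *
      (fromBlocks 0 Xᵀ (-1 : Matrix r r α) Zᵀ)ᵀ = fromCols 0 (-1) := by
    simp [fromBlocks_transpose, fromCols_mul_fromBlocks]
  rw [estimationErrorMatrix, fromRows_mul, Matrix.sub_mul, Matrix.mul_assoc, Matrix.mul_assoc,
    hT, hP, mul_fromCols, mul_fromCols, h₁, h₂]
  ext (i | i) (j | j) <;> simp [one_apply]

variable [Fintype p]

noncomputable def hendersonMatrix (X : Matrix m p α) (Z : Matrix m r α) (R : Matrix m m α)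
    (G : Matrix r r α) : Matrix (p ⊕ r) (p ⊕ r) α :=
  fromBlocks (Xᵀ * R⁻¹ * X) (Xᵀ * R⁻¹ * Z) (Zᵀ * R⁻¹ * X) (Zᵀ * R⁻¹ * Z + G⁻¹)

variable {X : Matrix m p α} {Z : Matrix m r α} {R V : Matrix m m α} {G : Matrix r r α}

theorem hendersonMatrix_mul_estimationErrorMatrix_mul_fromBlocks {L₁ : Matrix p m α}
    {L₂ : Matrix r m α} (hR : IsUnit R.det) (hG : IsUnit G.det)
    (hL : hendersonMatrix X Z R G * fromRows L₁ L₂ = fromRows (Xᵀ * R⁻¹) (Zᵀ * R⁻¹)) :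
    hendersonMatrix X Z R G * estimationErrorMatrix L₁ L₂ Z * fromBlocks G 0 0 R =
      fromBlocks 0 Xᵀ (-1) Zᵀ := by
  have hM : estimationErrorMatrix L₁ L₂ Z =
      fromRows L₁ L₂ * fromCols Z 1 - fromBlocks 0 0 1 0 := by
    ext (i | i) (j | j) <;> simp [estimationErrorMatrix, fromRows_mul]
  rw [hM, Matrix.mul_sub, ← Matrix.mul_assoc, hL]
  simp [hendersonMatrix, fromBlocks_multiply, sub_eq_add_neg, fromBlocks_neg, fromBlocks_add,
    Matrix.mul_assoc, nonsing_inv_mul _ hR, nonsing_inv_mul _ hG]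

variable [DecidableEq p]

noncomputable def glsMatrix (X : Matrix m p α) (V : Matrix m m α) : Matrix p m α :=
  (Xᵀ * V⁻¹ * X)⁻¹ * Xᵀ * V⁻¹

theorem glsMatrix_mul (hS : IsUnit (Xᵀ * V⁻¹ * X).det) : glsMatrix X V * X = 1 := by
  rw [glsMatrix, Matrix.mul_assoc, Matrix.mul_assoc, ← Matrix.mul_assoc Xᵀ,
    nonsing_inv_mul _ hS]

theorem mul_one_sub_mul_glsMatrix_mul {n : Type*} (hS : IsUnit (Xᵀ * V⁻¹ * X).det)
    (C : Matrix n m α) : C * (1 - X * glsMatrix X V) * X = 0 := by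
  rw [Matrix.mul_assoc, Matrix.sub_mul, Matrix.mul_assoc, glsMatrix_mul hS, Matrix.one_mul,
    Matrix.mul_one, sub_self, Matrix.mul_zero]

theorem transpose_mul_inv_mul_one_sub_mul_glsMatrix (hS : IsUnit (Xᵀ * V⁻¹ * X).det) :
    Xᵀ * V⁻¹ * (1 - X * glsMatrix X V) = 0 := by
  rw [glsMatrix, Matrix.mul_sub, Matrix.mul_one, ← Matrix.mul_assoc, ← Matrix.mul_assoc,
    ← Matrix.mul_assoc, mul_nonsing_inv _ hS, Matrix.one_mul, sub_self]

theorem hendersonMatrix_mul_blup (hV : V = R + Z * G * Zᵀ) (hR : IsUnit R.det)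
    (hG : IsUnit G.det) (hVu : IsUnit V.det) (hS : IsUnit (Xᵀ * V⁻¹ * X).det) :
    hendersonMatrix X Z R G *
        fromRows (glsMatrix X V) (G * Zᵀ * V⁻¹ * (1 - X * glsMatrix X V)) =
      fromRows (Xᵀ * R⁻¹) (Zᵀ * R⁻¹) := by
  set A := glsMatrix X V
  set Q := V⁻¹ * (1 - X * A)
  have hXQ : Xᵀ * Q = 0 := by
    rw [← Matrix.mul_assoc]; exact transpose_mul_inv_mul_one_sub_mul_glsMatrix hS
  -- `ZGZᵀ = V − R` and `VQ = I − XA`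
  have hZGZ : R⁻¹ * (Z * (G * (Zᵀ * Q))) = R⁻¹ * (1 - X * A) - Q := by
    have : Z * (G * (Zᵀ * Q)) = V * Q - R * Q := by
      rw [hV, Matrix.add_mul, add_sub_cancel_left, Matrix.mul_assoc, Matrix.mul_assoc]
    rw [this, Matrix.mul_sub, nonsing_inv_mul_cancel_left _ _ hR, ← Matrix.mul_assoc R⁻¹,
      Matrix.mul_assoc _ V, mul_nonsing_inv_cancel_left _ _ hVu]
  have hGQ : G⁻¹ * (G * (Zᵀ * Q)) = Zᵀ * Q := nonsing_inv_mul_cancel_left _ _ hG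
  have hB : G * Zᵀ * V⁻¹ * (1 - X * A) = G * (Zᵀ * Q) := by simp only [Q, Matrix.mul_assoc]
  rw [hendersonMatrix, fromBlocks_mul_fromRows, hB]
  congr 1
  · simp only [Matrix.mul_assoc, hZGZ, Matrix.mul_sub, Matrix.mul_one, hXQ]
    abel
  · simp only [Matrix.add_mul, Matrix.mul_assoc, hZGZ, hGQ, Matrix.mul_sub, Matrix.mul_one]
    abel

end MixedModel

theorem stmt13_general {m p r : ℕ}
    (X : Matrix (Fin m) (Fin p) ℝ) (Z : Matrix (Fin m) (Fin r) ℝ)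
    (R : Matrix (Fin m) (Fin m) ℝ) (G : Matrix (Fin r) (Fin r) ℝ)
    (hR : R.PosDef) (hG : G.PosDef)
    (hX : X.rank = p)
    (V : Matrix (Fin m) (Fin m) ℝ) (hV : V = R + Z * G * Zᵀ)
    (K : Matrix (Fin p ⊕ Fin r) (Fin p ⊕ Fin r) ℝ)
    (hK : K = fromBlocks (Xᵀ * R⁻¹ * X) (Xᵀ * R⁻¹ * Z)
        (Zᵀ * R⁻¹ * X) (Zᵀ * R⁻¹ * Z + G⁻¹))
    (W : Matrix (Fin r ⊕ Fin m) (Fin r ⊕ Fin m) ℝ)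
    (hW : W = fromBlocks G 0 0 R)
    (T : Matrix (Fin m) (Fin r ⊕ Fin m) ℝ) (hT : T = fromCols Z 1)
    (A : Matrix (Fin p) (Fin m) ℝ) (hA : A = (Xᵀ * V⁻¹ * X)⁻¹ * Xᵀ * V⁻¹)
    (P : Matrix (Fin r) (Fin r ⊕ Fin m) ℝ) (hP : P = fromCols 1 0)
    (M : Matrix (Fin p ⊕ Fin r) (Fin r ⊕ Fin m) ℝ)
    (hM : M = fromRows (A * T) (G * Zᵀ * V⁻¹ * (1 - X * A) * T - P)) :
    M * W * Mᵀ = K⁻¹ := by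
  have hXinj : Function.Injective X.mulVec :=
    mulVec_injective_of_rank_eq_card_s13 (by rw [hX, Fintype.card_fin])
  have hVpd : V.PosDef := hV ▸ hR.add_posSemidef
    (by simpa using hG.posSemidef.mul_mul_conjTranspose_same Z)
  have hSpd : (Xᵀ * V⁻¹ * X).PosDef := by
    simpa using hVpd.inv.conjTranspose_mul_mul_same hXinj
  have hRu := (isUnit_iff_isUnit_det R).mp hR.isUnit
  have hGu := (isUnit_iff_isUnit_det G).mp hG.isUnit
  have hVu := (isUnit_iff_isUnit_det V).mp hVpd.isUnit
  have hSu := (isUnit_iff_isUnit_det _).mp hSpd.isUnit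
  replace hK : K = hendersonMatrix X Z R G := hK
  replace hA : A = glsMatrix X V := hA
  subst hK hW hT hP hA
  replace hM : M = estimationErrorMatrix (glsMatrix X V)
      (G * Zᵀ * V⁻¹ * (1 - X * glsMatrix X V)) Z := hM
  subst hM
  have hKMW := hendersonMatrix_mul_estimationErrorMatrix_mul_fromBlocks hRu hGu
    (hendersonMatrix_mul_blup hV hRu hGu hVu hSu)
  have hMN := estimationErrorMatrix_mul_transpose_fromBlocks (Z := Z) (glsMatrix_mul hSu)
    (mul_one_sub_mul_glsMatrix_mul hSu (G * Zᵀ * V⁻¹))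
  refine (inv_eq_right_inv ?_).symm
  rw [← Matrix.mul_assoc, ← Matrix.mul_assoc, hKMW, ← transpose_transpose (fromBlocks _ _ _ _),
    ← transpose_mul, hMN, transpose_one]

/-- With `W = diag(G, R)`, `T = [Z I]`, `A = (XᵀV⁻¹X)⁻¹XᵀV⁻¹`, `P = [I 0]`
and `M` the matrix stacking `A·T` on top of `GZᵀV⁻¹(I − XA)·T − P`, one has
`M W Mᵀ = K⁻¹`: the matrix identity `MSE{μ̃ᵢ(θ)} = cᵢᵀK⁻¹cᵢ` for the variance
of the BLUP-based predictor of the mixed parameter. -/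
theorem stmt13 {m p r : ℕ} (hm : 0 < m) (hp : 0 < p) (hr : 0 < r)
    (X : Matrix (Fin m) (Fin p) ℝ) (Z : Matrix (Fin m) (Fin r) ℝ)
    (R : Matrix (Fin m) (Fin m) ℝ) (G : Matrix (Fin r) (Fin r) ℝ)
    (hR : R.PosDef) (hG : G.PosDef)
    (hX : X.rank = p)
    (V : Matrix (Fin m) (Fin m) ℝ) (hV : V = R + Z * G * Zᵀ)
    (K : Matrix (Fin p ⊕ Fin r) (Fin p ⊕ Fin r) ℝ)
    (hK : K = fromBlocks (Xᵀ * R⁻¹ * X) (Xᵀ * R⁻¹ * Z)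
        (Zᵀ * R⁻¹ * X) (Zᵀ * R⁻¹ * Z + G⁻¹))
    (W : Matrix (Fin r ⊕ Fin m) (Fin r ⊕ Fin m) ℝ)
    (hW : W = fromBlocks G 0 0 R)
    (T : Matrix (Fin m) (Fin r ⊕ Fin m) ℝ) (hT : T = fromCols Z 1)
    (A : Matrix (Fin p) (Fin m) ℝ) (hA : A = (Xᵀ * V⁻¹ * X)⁻¹ * Xᵀ * V⁻¹)
    (P : Matrix (Fin r) (Fin r ⊕ Fin m) ℝ) (hP : P = fromCols 1 0)
    (M : Matrix (Fin p ⊕ Fin r) (Fin r ⊕ Fin m) ℝ)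
    (hM : M = fromRows (A * T) (G * Zᵀ * V⁻¹ * (1 - X * A) * T - P)) :
    M * W * Mᵀ = K⁻¹ :=
  stmt13_general X Z R G hR hG hX V hV K hK W hW T hT A hA P hP M hM
end
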